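/- There exists an integrable function f : [0,∞) → ℝ with ∫₀^∞ |f(t)| dt > 0 such that the Lebesgue measure of the set {t ∈ [0,∞) : |Λ_1 f(t)| ≥ 1} is at least 1.38 · ∫₀^∞ |f(t)| dt. In particular, the weak-type (1,1) constant of the operator Λ_1 is at least 1.38, which disproves Gill's conjecture that this constant equals 2^{2/3}/(3(2 − 2^{2/3})) ≈ 1.28. -/
import Mathlib


open MeasureTheory Real Set

/-- The operator `Λ_m`. -/
noncomputable def Lam (m : ℕ) (f : ℝ → ℝ) (t : ℝ) : ℝ :=
  ((1 + (m : ℝ)) / t ^ (1 + (m : ℝ) / 2)) * (∫ s in (0:ℝ)..t, f s * s ^ ((m : ℝ) / 2)) - f t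

/-- There is an integrable function `f` on `[0,∞)` with positive `L¹`-norm such that the
measure of `{t ≥ 0 : |Λ_1 f(t)| ≥ 1}` is at least `1.38` times the `L¹`-norm of `f`; in
particular the weak-type `(1,1)` constant of `Λ_1` is at least `1.38`. -/
/- Explicit extremal function: five pieces, each of the form `±3 + γ√t`,
on which `Λ₁ fx ≡ ∓1` exactly. -/
noncomputable def fx : ℝ → ℝ := fun t =>
  if t ≤ 0 then 0
  else if t ≤ 1 then -3 + (7/2) * Real.sqrt t
  else if t ≤ 121/81 then 3 - (9/2) * Real.sqrt t
  else if t ≤ 5929/2025 then -3 + (45/22) * Real.sqrt t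
  else if t ≤ 717409/164025 then 3 - (405/154) * Real.sqrt t
  else if t ≤ 35153041/4100625 then -3 + (2025/1694) * Real.sqrt t
  else 0

lemma sqrt_q1 : Real.sqrt (121/81) = 11/9 := by
  rw [show (121/81 : ℝ) = (11/9)^2 by norm_num, Real.sqrt_sq (by norm_num)]

lemma sqrt_q2 : Real.sqrt (5929/2025) = 77/45 := by
  rw [show (5929/2025 : ℝ) = (77/45)^2 by norm_num, Real.sqrt_sq (by norm_num)]

lemma sqrt_q3 : Real.sqrt (717409/164025) = 847/405 := by
  rw [show (717409/164025 : ℝ) = (847/405)^2 by norm_num, Real.sqrt_sq (by norm_num)]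

lemma sqrt_q4 : Real.sqrt (35153041/4100625) = 5929/2025 := by
  rw [show (35153041/4100625 : ℝ) = (5929/2025)^2 by norm_num, Real.sqrt_sq (by norm_num)]

lemma sqrt_a0 : Real.sqrt (36/49) = 6/7 := by
  rw [show (36/49 : ℝ) = (6/7)^2 by norm_num, Real.sqrt_sq (by norm_num)]

lemma sqrt_a2 : Real.sqrt (484/225) = 22/15 := by
  rw [show (484/225 : ℝ) = (22/15)^2 by norm_num, Real.sqrt_sq (by norm_num)]

lemma sqrt_a4 : Real.sqrt (2869636/455625) = 1694/675 := by
  rw [show (2869636/455625 : ℝ) = (1694/675)^2 by norm_num, Real.sqrt_sq (by norm_num)]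

lemma rpow_32 (x : ℝ) (hx : 0 ≤ x) : x ^ ((3:ℝ)/2) = x * Real.sqrt x := by
  rcases hx.eq_or_lt with h | h
  · rw [← h, Real.zero_rpow (by norm_num), Real.sqrt_zero, mul_zero]
  · rw [show (3:ℝ)/2 = 1 + 1/2 by norm_num, Real.rpow_add h, Real.rpow_one,
      ← Real.sqrt_eq_rpow]

/-- piece evaluation lemmas -/
lemma fx_eq0 {s : ℝ} (h0 : 0 < s) (h1 : s ≤ 1) :
    fx s = 3 * (-1) + (7/2) * Real.sqrt s := by
  simp only [fx, if_neg (not_le.mpr h0), if_pos h1]; ring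

lemma fx_eq1 {s : ℝ} (h0 : 1 < s) (h1 : s ≤ 121/81) :
    fx s = 3 * 1 + (-9/2) * Real.sqrt s := by
  simp only [fx, if_neg (not_le.mpr (by linarith : (0:ℝ) < s)), if_neg (not_le.mpr h0),
    if_pos h1]; ring

lemma fx_eq2 {s : ℝ} (h0 : 121/81 < s) (h1 : s ≤ 5929/2025) :
    fx s = 3 * (-1) + (45/22) * Real.sqrt s := by
  simp only [fx, if_neg (not_le.mpr (by linarith : (0:ℝ) < s)),
    if_neg (not_le.mpr (by linarith : (1:ℝ) < s)), if_neg (not_le.mpr h0), if_pos h1]; ring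

lemma fx_eq3 {s : ℝ} (h0 : 5929/2025 < s) (h1 : s ≤ 717409/164025) :
    fx s = 3 * 1 + (-405/154) * Real.sqrt s := by
  simp only [fx, if_neg (not_le.mpr (by linarith : (0:ℝ) < s)),
    if_neg (not_le.mpr (by linarith : (1:ℝ) < s)),
    if_neg (not_le.mpr (by linarith : (121:ℝ)/81 < s)), if_neg (not_le.mpr h0), if_pos h1]; ring

lemma fx_eq4 {s : ℝ} (h0 : 717409/164025 < s) (h1 : s ≤ 35153041/4100625) :
    fx s = 3 * (-1) + (2025/1694) * Real.sqrt s := by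
  simp only [fx, if_neg (not_le.mpr (by linarith : (0:ℝ) < s)),
    if_neg (not_le.mpr (by linarith : (1:ℝ) < s)),
    if_neg (not_le.mpr (by linarith : (121:ℝ)/81 < s)),
    if_neg (not_le.mpr (by linarith : (5929:ℝ)/2025 < s)), if_neg (not_le.mpr h0), if_pos h1]
  ring

lemma fx_zero {t : ℝ} (h : t ≤ 0 ∨ 35153041/4100625 < t) : fx t = 0 := by
  rcases h with h | h
  · simp only [fx, if_pos h]
  · simp only [fx, if_neg (not_le.mpr (by linarith : (0:ℝ) < t)),
      if_neg (not_le.mpr (by linarith : (1:ℝ) < t)),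
      if_neg (not_le.mpr (by linarith : (121:ℝ)/81 < t)),
      if_neg (not_le.mpr (by linarith : (5929:ℝ)/2025 < t)),
      if_neg (not_le.mpr (by linarith : (717409:ℝ)/164025 < t)),
      if_neg (not_le.mpr h)]

lemma fx_meas : Measurable fx := by
  unfold fx
  apply Measurable.ite (measurableSet_le measurable_id measurable_const) measurable_const
  apply Measurable.ite (measurableSet_le measurable_id measurable_const)
    (measurable_const.add (measurable_const.mul Real.continuous_sqrt.measurable))
  apply Measurable.ite (measurableSet_le measurable_id measurable_const)
    (measurable_const.sub (measurable_const.mul Real.continuous_sqrt.measurable))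
  apply Measurable.ite (measurableSet_le measurable_id measurable_const)
    (measurable_const.add (measurable_const.mul Real.continuous_sqrt.measurable))
  apply Measurable.ite (measurableSet_le measurable_id measurable_const)
    (measurable_const.sub (measurable_const.mul Real.continuous_sqrt.measurable))
  apply Measurable.ite (measurableSet_le measurable_id measurable_const)
    (measurable_const.add (measurable_const.mul Real.continuous_sqrt.measurable))
  exact measurable_const

lemma fx_bound (t : ℝ) : |fx t| ≤ 10 := by
  unfold fx
  have hs0 : 0 ≤ Real.sqrt t := Real.sqrt_nonneg t
  split_ifs with h1 h2 h3 h4 h5 h6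
  · norm_num
  · have : Real.sqrt t ≤ 1 := by
      rw [show (1:ℝ) = Real.sqrt 1 by rw [Real.sqrt_one]]
      exact Real.sqrt_le_sqrt h2
    rw [abs_le]; constructor <;> nlinarith
  · have : Real.sqrt t ≤ 11/9 := by rw [← sqrt_q1]; exact Real.sqrt_le_sqrt h3
    rw [abs_le]; constructor <;> nlinarith
  · have : Real.sqrt t ≤ 77/45 := by rw [← sqrt_q2]; exact Real.sqrt_le_sqrt h4
    rw [abs_le]; constructor <;> nlinarith
  · have : Real.sqrt t ≤ 847/405 := by rw [← sqrt_q3]; exact Real.sqrt_le_sqrt h5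
    rw [abs_le]; constructor <;> nlinarith
  · have : Real.sqrt t ≤ 5929/2025 := by rw [← sqrt_q4]; exact Real.sqrt_le_sqrt h6
    rw [abs_le]; constructor <;> nlinarith
  · norm_num

/-- The weighted integrand. -/
noncomputable def fxw : ℝ → ℝ := fun s => fx s * s ^ ((1:ℝ)/2)

lemma fxw_meas : Measurable fxw :=
  fx_meas.mul (Real.continuous_rpow_const (by norm_num)).measurable

lemma fxw_bound {s : ℝ} (h0 : 0 ≤ s) (h1 : s ≤ 35153041/4100625) : |fxw s| ≤ 30 := by
  have h2 : s ^ ((1:ℝ)/2) = Real.sqrt s := (Real.sqrt_eq_rpow s).symm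
  have h3 : Real.sqrt s ≤ 5929/2025 := by rw [← sqrt_q4]; exact Real.sqrt_le_sqrt h1
  have h4 : (0:ℝ) ≤ Real.sqrt s := Real.sqrt_nonneg s
  have h5 := fx_bound s
  have h6 : |fx s| * |s ^ ((1:ℝ)/2)| ≤ 10 * 3 := by
    apply mul_le_mul h5 _ (abs_nonneg _) (by norm_num)
    rw [h2, abs_of_nonneg h4]; linarith
  calc |fxw s| = |fx s| * |s ^ ((1:ℝ)/2)| := abs_mul _ _
  _ ≤ 30 := by linarith

lemma fxw_intOn : IntegrableOn fxw (Set.Ioc 0 (35153041/4100625 : ℝ)) := by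
  apply Measure.integrableOn_of_bounded (M := 30) measure_Ioc_lt_top.ne
    fxw_meas.aestronglyMeasurable
  filter_upwards [ae_restrict_mem measurableSet_Ioc] with s hs
  exact fxw_bound hs.1.le hs.2

lemma fxw_II {a b : ℝ} (ha : 0 ≤ a) (hab : a ≤ b) (hb : b ≤ 35153041/4100625) :
    IntervalIntegrable fxw volume a b := by
  rw [intervalIntegrable_iff_integrableOn_Ioc_of_le hab]
  exact fxw_intOn.mono_set (Set.Ioc_subset_Ioc ha hb)

/-- Integration engine for one piece. -/
lemma int_piece (σ γ : ℝ) {p x : ℝ} (hp : 0 ≤ p) (hpx : p ≤ x)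
    (hf : ∀ s ∈ Set.Ioc p x, fx s = 3 * σ + γ * Real.sqrt s) :
    ∫ s in p..x, fxw s
      = (2*σ*(x*Real.sqrt x) + γ/2*x^2) - (2*σ*(p*Real.sqrt p) + γ/2*p^2) := by
  have hx0 : (0:ℝ) ≤ x := hp.trans hpx
  rw [intervalIntegral.integral_of_le hpx]
  rw [MeasureTheory.setIntegral_congr_fun (g := fun s => 3*σ*s^((1:ℝ)/2) + γ*s)
      measurableSet_Ioc ?_]
  · rw [← intervalIntegral.integral_of_le hpx]
    have h1 : IntervalIntegrable (fun s : ℝ => s ^ ((1:ℝ)/2)) volume p x :=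
      intervalIntegral.intervalIntegrable_rpow (Or.inl (by norm_num))
    have h2 : IntervalIntegrable (fun s : ℝ => γ * s) volume p x :=
      (continuous_id.intervalIntegrable p x).const_mul γ
    rw [intervalIntegral.integral_add (h1.const_mul (3*σ)) h2,
      intervalIntegral.integral_const_mul, intervalIntegral.integral_const_mul,
      integral_rpow (Or.inl (by norm_num)), integral_id]
    rw [show (1:ℝ)/2 + 1 = (3:ℝ)/2 by norm_num, rpow_32 x hx0, rpow_32 p hp]
    ring
  · intro s hs
    have hs0 : 0 < s := lt_of_le_of_lt hp hs.1
    have hss : Real.sqrt s * s ^ ((1:ℝ)/2) = s := by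
      rw [← Real.sqrt_eq_rpow, Real.mul_self_sqrt hs0.le]
    show fx s * s ^ ((1:ℝ)/2) = _
    rw [hf s hs]
    calc (3*σ + γ*Real.sqrt s) * s ^ ((1:ℝ)/2)
        = 3*σ*s^((1:ℝ)/2) + γ*(Real.sqrt s * s ^ ((1:ℝ)/2)) := by ring
      _ = 3*σ*s^((1:ℝ)/2) + γ*s := by rw [hss]

/-- Cumulative integrals on each piece. -/
lemma cum0 {t : ℝ} (h0 : 0 ≤ t) (h1 : t ≤ 1) :
    ∫ s in (0:ℝ)..t, fxw s = 2*(-1)*(t*Real.sqrt t) + (7/2)/2*t^2 := by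
  rw [int_piece (-1) (7/2) le_rfl h0 (fun s hs => fx_eq0 hs.1 (hs.2.trans h1))]
  rw [Real.sqrt_zero]; ring

lemma cum1 {t : ℝ} (h0 : 1 < t) (h1 : t ≤ 121/81) :
    ∫ s in (0:ℝ)..t, fxw s = 2*1*(t*Real.sqrt t) + (-9/2)/2*t^2 := by
  have e1 : (1:ℝ) ≤ 35153041/4100625 := by norm_num
  have e2 : t ≤ 35153041/4100625 := by linarith
  rw [← intervalIntegral.integral_add_adjacent_intervals
      (fxw_II le_rfl zero_le_one e1) (fxw_II zero_le_one h0.le e2),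
    cum0 zero_le_one le_rfl,
    int_piece 1 (-9/2) zero_le_one h0.le (fun s hs => fx_eq1 hs.1 (hs.2.trans h1))]
  rw [Real.sqrt_one]; ring

lemma cum2 {t : ℝ} (h0 : 121/81 < t) (h1 : t ≤ 5929/2025) :
    ∫ s in (0:ℝ)..t, fxw s = 2*(-1)*(t*Real.sqrt t) + (45/22)/2*t^2 := by
  have e0 : (0:ℝ) ≤ 121/81 := by norm_num
  have e1 : (121/81:ℝ) ≤ 35153041/4100625 := by norm_num
  have e2 : t ≤ 35153041/4100625 := by linarith
  rw [← intervalIntegral.integral_add_adjacent_intervals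
      (fxw_II le_rfl e0 e1) (fxw_II e0 h0.le e2),
    cum1 (by norm_num) le_rfl,
    int_piece (-1) (45/22) e0 h0.le (fun s hs => fx_eq2 hs.1 (hs.2.trans h1))]
  rw [sqrt_q1]; ring

lemma cum3 {t : ℝ} (h0 : 5929/2025 < t) (h1 : t ≤ 717409/164025) :
    ∫ s in (0:ℝ)..t, fxw s = 2*1*(t*Real.sqrt t) + (-405/154)/2*t^2 := by
  have e0 : (0:ℝ) ≤ 5929/2025 := by norm_num
  have e1 : (5929/2025:ℝ) ≤ 35153041/4100625 := by norm_num
  have e2 : t ≤ 35153041/4100625 := by linarith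
  rw [← intervalIntegral.integral_add_adjacent_intervals
      (fxw_II le_rfl e0 e1) (fxw_II e0 h0.le e2),
    cum2 (by norm_num) le_rfl,
    int_piece 1 (-405/154) e0 h0.le (fun s hs => fx_eq3 hs.1 (hs.2.trans h1))]
  rw [sqrt_q2]; ring

lemma cum4 {t : ℝ} (h0 : 717409/164025 < t) (h1 : t ≤ 35153041/4100625) :
    ∫ s in (0:ℝ)..t, fxw s = 2*(-1)*(t*Real.sqrt t) + (2025/1694)/2*t^2 := by
  have e0 : (0:ℝ) ≤ 717409/164025 := by norm_num
  have e1 : (717409/164025:ℝ) ≤ 35153041/4100625 := by norm_num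
  rw [← intervalIntegral.integral_add_adjacent_intervals
      (fxw_II le_rfl e0 e1) (fxw_II e0 h0.le h1),
    cum3 (by norm_num) le_rfl,
    int_piece (-1) (2025/1694) e0 h0.le (fun s hs => fx_eq4 hs.1 (hs.2.trans h1))]
  rw [sqrt_q3]; ring

/-- Λ₁ fx = σ on each piece. -/
lemma lam_eval {t σ γ : ℝ} (ht : 0 < t)
    (hI : ∫ s in (0:ℝ)..t, fxw s = 2*σ*(t*Real.sqrt t) + γ/2*t^2)
    (hft : fx t = 3*σ + γ*Real.sqrt t) :
    Lam 1 fx t = σ := by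
  unfold Lam
  have hcast : ((1:ℕ) : ℝ) = 1 := Nat.cast_one
  rw [hcast]
  have hint : (∫ s in (0:ℝ)..t, fx s * s ^ ((1:ℝ)/2)) = 2*σ*(t*Real.sqrt t) + γ/2*t^2 := hI
  rw [show (1:ℝ)/2 = 1/2 by norm_num] at hint
  rw [hint, hft]
  rw [show (1 + (1:ℝ)/2) = (3:ℝ)/2 by norm_num, rpow_32 t ht.le]
  have hu : Real.sqrt t > 0 := Real.sqrt_pos.mpr ht
  have htu : Real.sqrt t * Real.sqrt t = t := Real.mul_self_sqrt ht.le
  have e : (t:ℝ)^2 = (t * Real.sqrt t) * Real.sqrt t := by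
    rw [pow_two]; nth_rewrite 1 [← htu]; ring
  rw [e]
  field_simp
  ring

/-- Engine for integrating `|fx|` over a sign-constant subinterval. -/
lemma int_abs (c d : ℝ) {p x : ℝ} (hp : 0 ≤ p) (hpx : p ≤ x)
    (hf : ∀ s ∈ Set.Ioc p x, |fx s| = c + d * Real.sqrt s) :
    ∫ s in p..x, |fx s|
      = (c*x + 2*d/3*(x*Real.sqrt x)) - (c*p + 2*d/3*(p*Real.sqrt p)) := by
  have hx0 : (0:ℝ) ≤ x := hp.trans hpx
  rw [intervalIntegral.integral_of_le hpx]
  rw [MeasureTheory.setIntegral_congr_fun (g := fun s => c + d*s^((1:ℝ)/2))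
      measurableSet_Ioc ?_]
  · rw [← intervalIntegral.integral_of_le hpx]
    have h1 : IntervalIntegrable (fun s : ℝ => s ^ ((1:ℝ)/2)) volume p x :=
      intervalIntegral.intervalIntegrable_rpow (Or.inl (by norm_num))
    rw [intervalIntegral.integral_add (intervalIntegrable_const) (h1.const_mul d),
      intervalIntegral.integral_const, intervalIntegral.integral_const_mul,
      integral_rpow (Or.inl (by norm_num))]
    rw [show (1:ℝ)/2 + 1 = (3:ℝ)/2 by norm_num, rpow_32 x hx0, rpow_32 p hp]
    simp only [smul_eq_mul]
    ring
  · intro s hs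
    show |fx s| = c + d * s ^ ((1:ℝ)/2)
    rw [hf s hs, ← Real.sqrt_eq_rpow]

/-- |fx| integrable pieces -/
lemma fxa_II {a b : ℝ} (ha : 0 ≤ a) (hab : a ≤ b) (hb : b ≤ 35153041/4100625) :
    IntervalIntegrable (fun s => |fx s|) volume a b := by
  rw [intervalIntegrable_iff_integrableOn_Ioc_of_le hab]
  have : IntegrableOn (fun s => |fx s|) (Set.Ioc 0 (35153041/4100625 : ℝ)) := by
    apply Measure.integrableOn_of_bounded (M := 10) measure_Ioc_lt_top.ne
      (fx_meas.abs).aestronglyMeasurable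
    filter_upwards with s
    rw [Real.norm_eq_abs, abs_abs]
    exact fx_bound s
  exact this.mono_set (Set.Ioc_subset_Ioc ha hb)

lemma sqrt_lb {s q r : ℝ} (hr : 0 ≤ r) (hq : q = r^2) (h : q < s) : r < Real.sqrt s := by
  rw [show r = Real.sqrt q by rw [hq, Real.sqrt_sq hr]]
  exact Real.sqrt_lt_sqrt (by rw [hq]; positivity) h

lemma sqrt_ub {s q r : ℝ} (hr : 0 ≤ r) (hq : q = r^2) (h : s ≤ q) : Real.sqrt s ≤ r := by
  rw [show r = Real.sqrt q by rw [hq, Real.sqrt_sq hr]]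
  exact Real.sqrt_le_sqrt h

set_option maxHeartbeats 1000000 in
/-- The total integral of `|fx|`. -/
lemma abs_total :
    ∫ s in (0:ℝ)..(35153041/4100625 : ℝ), |fx s| = 3690703838/602791875 := by
  have i1 : ∫ s in (0:ℝ)..(36/49:ℝ), |fx s|
      = (3*(36/49) + 2*(-7/2)/3*((36/49)*Real.sqrt (36/49)))
        - (3*0 + 2*(-7/2)/3*(0*Real.sqrt 0)) := by
    apply int_abs 3 (-7/2) le_rfl (by norm_num)
    intro s hs
    rw [fx_eq0 hs.1 (by nlinarith [hs.2] : s ≤ 1)]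
    have hub : Real.sqrt s ≤ 6/7 := sqrt_ub (by norm_num) (by norm_num) hs.2
    rw [abs_of_nonpos (by nlinarith)]; ring
  have i2 : ∫ s in (36/49:ℝ)..(1:ℝ), |fx s|
      = ((-3)*1 + 2*(7/2)/3*(1*Real.sqrt 1))
        - ((-3)*(36/49) + 2*(7/2)/3*((36/49)*Real.sqrt (36/49))) := by
    apply int_abs (-3) (7/2) (by norm_num) (by norm_num)
    intro s hs
    rw [fx_eq0 (by nlinarith [hs.1] : 0 < s) hs.2]
    have hlb : 6/7 < Real.sqrt s := sqrt_lb (by norm_num) (by norm_num) hs.1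
    rw [abs_of_nonneg (by nlinarith)]; ring
  have i3 : ∫ s in (1:ℝ)..(121/81:ℝ), |fx s|
      = ((-3)*(121/81) + 2*(9/2)/3*((121/81)*Real.sqrt (121/81)))
        - ((-3)*1 + 2*(9/2)/3*(1*Real.sqrt 1)) := by
    apply int_abs (-3) (9/2) (by norm_num) (by norm_num)
    intro s hs
    rw [fx_eq1 hs.1 hs.2]
    have hlb : 1 < Real.sqrt s := sqrt_lb (by norm_num) (by norm_num) hs.1
    rw [abs_of_nonpos (by nlinarith)]; ring
  have i4 : ∫ s in (121/81:ℝ)..(484/225:ℝ), |fx s|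
      = (3*(484/225) + 2*(-45/22)/3*((484/225)*Real.sqrt (484/225)))
        - (3*(121/81) + 2*(-45/22)/3*((121/81)*Real.sqrt (121/81))) := by
    apply int_abs 3 (-45/22) (by norm_num) (by norm_num)
    intro s hs
    rw [fx_eq2 hs.1 (by nlinarith [hs.2] : s ≤ 5929/2025)]
    have hub : Real.sqrt s ≤ 22/15 := sqrt_ub (by norm_num) (by norm_num) hs.2
    rw [abs_of_nonpos (by nlinarith)]; ring
  have i5 : ∫ s in (484/225:ℝ)..(5929/2025:ℝ), |fx s|
      = ((-3)*(5929/2025) + 2*(45/22)/3*((5929/2025)*Real.sqrt (5929/2025)))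
        - ((-3)*(484/225) + 2*(45/22)/3*((484/225)*Real.sqrt (484/225))) := by
    apply int_abs (-3) (45/22) (by norm_num) (by norm_num)
    intro s hs
    rw [fx_eq2 (by nlinarith [hs.1] : 121/81 < s) hs.2]
    have hlb : 22/15 < Real.sqrt s := sqrt_lb (by norm_num) (by norm_num) hs.1
    rw [abs_of_nonneg (by nlinarith)]; ring
  have i6 : ∫ s in (5929/2025:ℝ)..(717409/164025:ℝ), |fx s|
      = ((-3)*(717409/164025) + 2*(405/154)/3*((717409/164025)*Real.sqrt (717409/164025)))
        - ((-3)*(5929/2025) + 2*(405/154)/3*((5929/2025)*Real.sqrt (5929/2025))) := by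
    apply int_abs (-3) (405/154) (by norm_num) (by norm_num)
    intro s hs
    rw [fx_eq3 hs.1 hs.2]
    have hlb : 77/45 < Real.sqrt s := sqrt_lb (by norm_num) (by norm_num) hs.1
    rw [abs_of_nonpos (by nlinarith)]; ring
  have i7 : ∫ s in (717409/164025:ℝ)..(2869636/455625:ℝ), |fx s|
      = (3*(2869636/455625) + 2*(-2025/1694)/3*((2869636/455625)*Real.sqrt (2869636/455625)))
        - (3*(717409/164025) + 2*(-2025/1694)/3*((717409/164025)*Real.sqrt (717409/164025))) := by
    apply int_abs 3 (-2025/1694) (by norm_num) (by norm_num)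
    intro s hs
    rw [fx_eq4 hs.1 (by nlinarith [hs.2] : s ≤ 35153041/4100625)]
    have hub : Real.sqrt s ≤ 1694/675 := sqrt_ub (by norm_num) (by norm_num) hs.2
    rw [abs_of_nonpos (by nlinarith)]; ring
  have i8 : ∫ s in (2869636/455625:ℝ)..(35153041/4100625:ℝ), |fx s|
      = ((-3)*(35153041/4100625) + 2*(2025/1694)/3*((35153041/4100625)*Real.sqrt (35153041/4100625)))
        - ((-3)*(2869636/455625) + 2*(2025/1694)/3*((2869636/455625)*Real.sqrt (2869636/455625))) := by
    apply int_abs (-3) (2025/1694) (by norm_num) (by norm_num)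
    intro s hs
    rw [fx_eq4 (by nlinarith [hs.1] : 717409/164025 < s) hs.2]
    have hlb : 1694/675 < Real.sqrt s := sqrt_lb (by norm_num) (by norm_num) hs.1
    rw [abs_of_nonneg (by nlinarith)]; ring
  have hsum : ∫ s in (0:ℝ)..(35153041/4100625 : ℝ), |fx s|
      = (((((((∫ s in (0:ℝ)..(36/49:ℝ), |fx s|)
        + ∫ s in (36/49:ℝ)..(1:ℝ), |fx s|)
        + ∫ s in (1:ℝ)..(121/81:ℝ), |fx s|)
        + ∫ s in (121/81:ℝ)..(484/225:ℝ), |fx s|)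
        + ∫ s in (484/225:ℝ)..(5929/2025:ℝ), |fx s|)
        + ∫ s in (5929/2025:ℝ)..(717409/164025:ℝ), |fx s|)
        + ∫ s in (717409/164025:ℝ)..(2869636/455625:ℝ), |fx s|)
        + ∫ s in (2869636/455625:ℝ)..(35153041/4100625:ℝ), |fx s| := by
    rw [intervalIntegral.integral_add_adjacent_intervals
        (fxa_II (by norm_num) (by norm_num) (by norm_num))
        (fxa_II (by norm_num) (by norm_num) (by norm_num))]
    rw [intervalIntegral.integral_add_adjacent_intervals
        (fxa_II (by norm_num) (by norm_num) (by norm_num))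
        (fxa_II (by norm_num) (by norm_num) (by norm_num))]
    rw [intervalIntegral.integral_add_adjacent_intervals
        (fxa_II (by norm_num) (by norm_num) (by norm_num))
        (fxa_II (by norm_num) (by norm_num) (by norm_num))]
    rw [intervalIntegral.integral_add_adjacent_intervals
        (fxa_II (by norm_num) (by norm_num) (by norm_num))
        (fxa_II (by norm_num) (by norm_num) (by norm_num))]
    rw [intervalIntegral.integral_add_adjacent_intervals
        (fxa_II (by norm_num) (by norm_num) (by norm_num))
        (fxa_II (by norm_num) (by norm_num) (by norm_num))]
    rw [intervalIntegral.integral_add_adjacent_intervals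
        (fxa_II (by norm_num) (by norm_num) (by norm_num))
        (fxa_II (by norm_num) (by norm_num) (by norm_num))]
    rw [intervalIntegral.integral_add_adjacent_intervals
        (fxa_II (by norm_num) (by norm_num) (by norm_num))
        (fxa_II (by norm_num) (by norm_num) (by norm_num))]
  rw [hsum, i1, i2, i3, i4, i5, i6, i7, i8,
    Real.sqrt_zero, Real.sqrt_one, sqrt_a0, sqrt_q1, sqrt_a2, sqrt_q2, sqrt_q3, sqrt_a4, sqrt_q4]
  norm_num

set_option maxHeartbeats 1000000 in
theorem stmt_6 :
    ∃ f : ℝ → ℝ, MeasureTheory.IntegrableOn f (Set.Ici 0) ∧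
      0 < ∫ t in Set.Ici (0 : ℝ), |f t| ∧
      ENNReal.ofReal (1.38 * ∫ t in Set.Ici (0 : ℝ), |f t|) ≤
        MeasureTheory.volume {t : ℝ | 0 ≤ t ∧ 1 ≤ |Lam 1 f t|} := by
  have hT0 : (0:ℝ) ≤ 35153041/4100625 := by norm_num
  have hzero : ∀ t ∈ Set.Ici (0:ℝ) \ Set.Ioc 0 (35153041/4100625 : ℝ), fx t = 0 := by
    rintro t ⟨ht0, htn⟩
    rcases le_or_gt t 0 with h | h
    · exact fx_zero (Or.inl h)
    · refine fx_zero (Or.inr ?_)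
      by_contra hc
      push_neg at hc
      exact htn ⟨h, hc⟩
  have hsub : Set.Ioc (0:ℝ) (35153041/4100625 : ℝ) ⊆ Set.Ici 0 := fun t ht => ht.1.le
  have hunion : Set.Ioc (0:ℝ) (35153041/4100625 : ℝ)
      ∪ (Set.Ici 0 \ Set.Ioc 0 (35153041/4100625 : ℝ)) = Set.Ici 0 :=
    Set.union_diff_cancel hsub
  have hIntIoc : IntegrableOn fx (Set.Ioc 0 (35153041/4100625 : ℝ)) := by
    apply Measure.integrableOn_of_bounded (M := 10) measure_Ioc_lt_top.ne
      fx_meas.aestronglyMeasurable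
    filter_upwards with s
    rw [Real.norm_eq_abs]
    exact fx_bound s
  have hIntDiff : IntegrableOn fx (Set.Ici 0 \ Set.Ioc 0 (35153041/4100625 : ℝ)) :=
    (integrableOn_zero).congr_fun (fun t ht => (hzero t ht).symm)
      (measurableSet_Ici.diff measurableSet_Ioc)
  have hIntOn : IntegrableOn fx (Set.Ici 0) := by
    rw [← hunion]; exact hIntIoc.union hIntDiff
  have hIval : ∫ t in Set.Ici (0:ℝ), |fx t| = 3690703838/602791875 := by
    rw [← hunion, MeasureTheory.setIntegral_union disjoint_sdiff_self_right
      (measurableSet_Ici.diff measurableSet_Ioc) hIntIoc.abs hIntDiff.abs]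
    have h2 : ∫ t in Set.Ici 0 \ Set.Ioc 0 (35153041/4100625 : ℝ), |fx t| = 0 := by
      rw [MeasureTheory.setIntegral_congr_fun (g := fun _ => (0:ℝ))
        (measurableSet_Ici.diff measurableSet_Ioc)
        (fun t ht => by rw [hzero t ht, abs_zero])]
      simp
    rw [h2, add_zero, ← intervalIntegral.integral_of_le hT0]
    exact abs_total
  refine ⟨fx, hIntOn, ?_, ?_⟩
  · rw [hIval]; norm_num
  · have hset : Set.Ioc (0:ℝ) (35153041/4100625 : ℝ)
        ⊆ {t : ℝ | 0 ≤ t ∧ 1 ≤ |Lam 1 fx t|} := by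
      intro t ht
      refine ⟨ht.1.le, ?_⟩
      rcases le_or_gt t 1 with c1 | c1
      · rw [lam_eval ht.1 (cum0 ht.1.le c1) (fx_eq0 ht.1 c1)]; norm_num
      rcases le_or_gt t (121/81 : ℝ) with c2 | c2
      · rw [lam_eval ht.1 (cum1 c1 c2) (fx_eq1 c1 c2)]; norm_num
      rcases le_or_gt t (5929/2025 : ℝ) with c3 | c3
      · rw [lam_eval ht.1 (cum2 c2 c3) (fx_eq2 c2 c3)]; norm_num
      rcases le_or_gt t (717409/164025 : ℝ) with c4 | c4
      · rw [lam_eval ht.1 (cum3 c3 c4) (fx_eq3 c3 c4)]; norm_num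
      · rw [lam_eval ht.1 (cum4 c4 ht.2) (fx_eq4 c4 ht.2)]; norm_num
    calc ENNReal.ofReal (1.38 * ∫ t in Set.Ici (0:ℝ), |fx t|)
        ≤ ENNReal.ofReal (35153041/4100625 : ℝ) := by
          apply ENNReal.ofReal_le_ofReal
          rw [hIval]; norm_num
      _ = volume (Set.Ioc (0:ℝ) (35153041/4100625 : ℝ)) := by
          rw [Real.volume_Ioc, sub_zero]
      _ ≤ volume {t : ℝ | 0 ≤ t ∧ 1 ≤ |Lam 1 fx t|} := measure_mono hset
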